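/- Let N ≥ 3, λ > 0, let F : ℝ → ℝ be Borel measurable with G(s) := F(s) − (λ/2)s², and let w, v : EuclideanSpace ℝ (Fin N) → ℝ be differentiable with ∫_{ℝ^N} ‖∇w‖² dx < ∞ and 0 < ∫_{ℝ^N} ‖∇v‖² dx < ∞. Let t : ℝ → ℝ satisfy t(α) ≥ t̄ for all α, for some constant t̄ > 0, and suppose that for every α ∈ ℝ the function γ(α) := (w + α v)(·/t(α)) has ‖∇γ(α)‖², γ(α)² and F∘γ(α) integrable and satisfies the Pohozaev constraint (N−2) ∫_{ℝ^N} ‖∇γ(α)‖² dx = 2N ∫_{ℝ^N} G(γ(α)) dx. Then I(γ(α)) → +∞ as α → +∞ and as α → −∞. -/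

import Mathlib

/-!
On the Pohozaev manifold the energy reduces to `I(u) = (1/N) ∫ ‖∇u‖²`. Dilation by `t` multiplies
the Dirichlet integral by `t ^ (N - 2) ≥ t̄ ^ (N - 2)`, while
`∫ ‖∇w + α ∇v‖² ≥ α² / 2 ∫ ‖∇v‖² - ∫ ‖∇w‖²` grows quadratically in `α`; hence `I(γ(α)) → ∞`
as `|α| → ∞`.
-/

open MeasureTheory Filter Module

theorem energy_eq_integral_div_of_pohozaev {X : Type*} [MeasurableSpace X] {μ : Measure X}
    {N lam : ℝ} (hN : N ≠ 0) {F G : ℝ → ℝ}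
    (hG : ∀ s, G s = F s - lam / 2 * s ^ 2) {g u : X → ℝ} (hg : Integrable g μ)
    (hu : Integrable (fun x => u x ^ 2) μ) (hF : Integrable (fun x => F (u x)) μ)
    (hcon : (N - 2) * ∫ x, g x ∂μ = 2 * N * ∫ x, G (u x) ∂μ) :
    1 / 2 * (∫ x, (g x + lam * u x ^ 2) ∂μ) - ∫ x, F (u x) ∂μ = (∫ x, g x ∂μ) / N := by
  have hGint : ∫ x, G (u x) ∂μ = ∫ x, F (u x) ∂μ - lam / 2 * ∫ x, u x ^ 2 ∂μ := by
    simp_rw [hG]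
    rw [integral_sub hF (hu.const_mul _), integral_const_mul]
  rw [integral_add hg (hu.const_mul lam), integral_const_mul, eq_div_iff hN]
  linear_combination (1 / 2 : ℝ) * hcon + N * hGint

section QuadraticGrowth

variable {X Y : Type*} [MeasurableSpace X] {μ : Measure X}
  [NormedAddCommGroup Y] [NormedSpace ℝ Y]

theorem integral_norm_add_smul_sq_ge {a b : X → Y} (ha : MemLp a 2 μ) (hb : MemLp b 2 μ)
    (α : ℝ) :
    α ^ 2 / 2 * ∫ x, ‖b x‖ ^ 2 ∂μ - ∫ x, ‖a x‖ ^ 2 ∂μ ≤ ∫ x, ‖a x + α • b x‖ ^ 2 ∂μ := by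
  have ha2 := ha.integrable_norm_pow two_ne_zero
  have hb2 := hb.integrable_norm_pow two_ne_zero
  rw [← integral_const_mul, ← integral_sub (hb2.const_mul _) ha2]
  refine integral_mono ((hb2.const_mul _).sub ha2)
    ((ha.add (hb.const_smul α)).integrable_norm_pow two_ne_zero) fun x => ?_
  have hle : ‖α • b x‖ ≤ ‖a x + α • b x‖ + ‖a x‖ := by
    simpa using norm_sub_le (a x + α • b x) (a x)
  have hsq := (pow_le_pow_left₀ (norm_nonneg _) hle 2).trans add_sq_le
  rw [norm_smul, mul_pow, Real.norm_eq_abs, sq_abs] at hsq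
  linarith

theorem tendsto_integral_norm_add_smul_sq_cocompact {a b : X → Y} (ha : MemLp a 2 μ)
    (hb : MemLp b 2 μ) (hb0 : 0 < ∫ x, ‖b x‖ ^ 2 ∂μ) :
    Tendsto (fun α : ℝ => ∫ x, ‖a x + α • b x‖ ^ 2 ∂μ) (cocompact ℝ) atTop := by
  refine tendsto_atTop_mono (integral_norm_add_smul_sq_ge ha hb) ?_
  refine tendsto_atTop_add_const_right _ _ ?_
  simp_rw [div_mul_eq_mul_div, mul_div_assoc]
  refine Tendsto.atTop_mul_const (half_pos hb0) ?_
  have h := (tendsto_pow_atTop two_ne_zero).comp (tendsto_norm_cocompact_atTop (E := ℝ))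
  simpa only [Function.comp_def, Real.norm_eq_abs, sq_abs] using h

end QuadraticGrowth

section Scaling

variable {E Y : Type*} [NormedAddCommGroup E] [NormedSpace ℝ E] [FiniteDimensional ℝ E]
  [MeasurableSpace E] [BorelSpace E] (μ : Measure E) [μ.IsAddHaarMeasure]
  [NormedAddCommGroup Y] [NormedSpace ℝ Y]

theorem integral_norm_fderiv_comp_inv_smul_sq (u : E → Y) {c : ℝ} (hc : 0 ≤ c) :
    ∫ x, ‖fderiv ℝ (fun x => u (c⁻¹ • x)) x‖ ^ 2 ∂μ =
      c ^ finrank ℝ E / c ^ 2 * ∫ x, ‖fderiv ℝ u x‖ ^ 2 ∂μ := by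
  simp_rw [fderiv_comp_smul, norm_smul, mul_pow, norm_inv, Real.norm_of_nonneg hc]
  rw [integral_const_mul,
    Measure.integral_comp_inv_smul_of_nonneg μ (fun y => ‖fderiv ℝ u y‖ ^ 2) hc, smul_eq_mul,
    inv_pow]
  ring

end Scaling

theorem energy_coercive_on_pohozaev_path_general {N : ℕ} (hN : 3 ≤ N)
    (lam : ℝ)
    (F G : ℝ → ℝ)
    (hG : ∀ s : ℝ, G s = F s - lam / 2 * s ^ 2)
    (w v : EuclideanSpace ℝ (Fin N) → ℝ)
    (hw : Differentiable ℝ w) (hv : Differentiable ℝ v)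
    (hwgrad : Integrable (fun x => ‖fderiv ℝ w x‖ ^ 2))
    (hvgrad : Integrable (fun x => ‖fderiv ℝ v x‖ ^ 2))
    (hvpos : 0 < ∫ x, ‖fderiv ℝ v x‖ ^ 2)
    (t : ℝ → ℝ) (tbar : ℝ) (htbar : 0 < tbar) (ht : ∀ α : ℝ, tbar ≤ t α)
    (γ : ℝ → EuclideanSpace ℝ (Fin N) → ℝ)
    (hγ : ∀ α : ℝ, γ α = fun x => w ((t α)⁻¹ • x) + α * v ((t α)⁻¹ • x))
    (hγgrad : ∀ α : ℝ, Integrable (fun x => ‖fderiv ℝ (γ α) x‖ ^ 2))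
    (hγsq : ∀ α : ℝ, Integrable (fun x => (γ α x) ^ 2))
    (hγF : ∀ α : ℝ, Integrable (fun x => F (γ α x)))
    (hcon : ∀ α : ℝ, ((N : ℝ) - 2) * ∫ x, ‖fderiv ℝ (γ α) x‖ ^ 2 =
      2 * (N : ℝ) * ∫ x, G (γ α x)) :
    Tendsto (fun α : ℝ =>
        ((1 : ℝ) / 2) * (∫ x, (‖fderiv ℝ (γ α) x‖ ^ 2 + lam * (γ α x) ^ 2)) -
          ∫ x, F (γ α x)) atTop atTop ∧
    Tendsto (fun α : ℝ =>
        ((1 : ℝ) / 2) * (∫ x, (‖fderiv ℝ (γ α) x‖ ^ 2 + lam * (γ α x) ^ 2)) -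
          ∫ x, F (γ α x)) atBot atTop := by
  have memLp_fderiv : ∀ u : EuclideanSpace ℝ (Fin N) → ℝ,
      Integrable (fun x => ‖fderiv ℝ u x‖ ^ 2) → MemLp (fderiv ℝ u) 2 := fun u hu =>
    (memLp_two_iff_integrable_sq_norm (measurable_fderiv ℝ u).aestronglyMeasurable).2 hu
  set Q := fun α : ℝ => ∫ x, ‖fderiv ℝ w x + α • fderiv ℝ v x‖ ^ 2
  have hQ : Tendsto Q (cocompact ℝ) atTop :=
    tendsto_integral_norm_add_smul_sq_cocompact (memLp_fderiv w hwgrad) (memLp_fderiv v hvgrad)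
      hvpos
  have hgrad : ∀ α, ∫ x, ‖fderiv ℝ (γ α) x‖ ^ 2 = t α ^ (N - 2) * Q α := by
    intro α
    have ht0 : 0 < t α := htbar.trans_le (ht α)
    have hγα : γ α = fun x => (w + α • v) ((t α)⁻¹ • x) := hγ α
    rw [hγα, integral_norm_fderiv_comp_inv_smul_sq volume _ ht0.le, finrank_euclideanSpace_fin,
      div_eq_mul_inv, ← pow_sub₀ _ ht0.ne' (by omega)]
    simp_rw [Q, fderiv_add (hw _) ((hv _).const_smul α), fderiv_const_smul (hv _)]
  rw [← tendsto_sup, sup_comm, ← cocompact_eq_atBot_atTop]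
  refine tendsto_atTop_mono (fun α => ?_)
    (hQ.const_mul_atTop (r := tbar ^ (N - 2) / N) (by positivity))
  rw [energy_eq_integral_div_of_pohozaev (by positivity) hG (hγgrad α) (hγsq α) (hγF α) (hcon α),
    hgrad α, div_mul_eq_mul_div]
  have hQ0 : 0 ≤ Q α := integral_nonneg fun x => by positivity
  gcongr
  exact ht α

/-- Coercivity of the energy along a projected line on the Pohozaev manifold: if
`t(α) ≥ t̄ > 0` and `γ(α) = (w + αv)(·/t(α))` lies on the Pohozaev manifold for all `α`,
then `I(γ(α)) → +∞` as `α → ±∞`. -/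
theorem energy_coercive_on_pohozaev_path {N : ℕ} (hN : 3 ≤ N)
    (lam : ℝ) (hlam : 0 < lam)
    (F G : ℝ → ℝ) (hFmeas : Measurable F)
    (hG : ∀ s : ℝ, G s = F s - lam / 2 * s ^ 2)
    (w v : EuclideanSpace ℝ (Fin N) → ℝ)
    (hw : Differentiable ℝ w) (hv : Differentiable ℝ v)
    (hwgrad : Integrable (fun x => ‖fderiv ℝ w x‖ ^ 2))
    (hvgrad : Integrable (fun x => ‖fderiv ℝ v x‖ ^ 2))
    (hvpos : 0 < ∫ x, ‖fderiv ℝ v x‖ ^ 2)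
    (t : ℝ → ℝ) (tbar : ℝ) (htbar : 0 < tbar) (ht : ∀ α : ℝ, tbar ≤ t α)
    (γ : ℝ → EuclideanSpace ℝ (Fin N) → ℝ)
    (hγ : ∀ α : ℝ, γ α = fun x => w ((t α)⁻¹ • x) + α * v ((t α)⁻¹ • x))
    (hγgrad : ∀ α : ℝ, Integrable (fun x => ‖fderiv ℝ (γ α) x‖ ^ 2))
    (hγsq : ∀ α : ℝ, Integrable (fun x => (γ α x) ^ 2))
    (hγF : ∀ α : ℝ, Integrable (fun x => F (γ α x)))
    (hcon : ∀ α : ℝ, ((N : ℝ) - 2) * ∫ x, ‖fderiv ℝ (γ α) x‖ ^ 2 =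
      2 * (N : ℝ) * ∫ x, G (γ α x)) :
    Tendsto (fun α : ℝ =>
        ((1 : ℝ) / 2) * (∫ x, (‖fderiv ℝ (γ α) x‖ ^ 2 + lam * (γ α x) ^ 2)) -
          ∫ x, F (γ α x)) atTop atTop ∧
    Tendsto (fun α : ℝ =>
        ((1 : ℝ) / 2) * (∫ x, (‖fderiv ℝ (γ α) x‖ ^ 2 + lam * (γ α x) ^ 2)) -
          ∫ x, F (γ α x)) atBot atTop :=
  energy_coercive_on_pohozaev_path_general hN lam F G hG w v hw hv hwgrad hvgrad hvpos t tbar htbar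
    ht γ hγ hγgrad hγsq hγF hcon
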